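/- Let n ≥ 1, d ∈ (0, n], κ ∈ (0, d), and 1 < q < d/κ. Then there is a constant c depending only on d such that for any function f : ℝⁿ → [−∞, ∞] and every x ∈ ℝⁿ, M^d_κ f(x) ≤ c ( ∫_{ℝⁿ} |f(y)|^q dH^d_∞(y) )^{κ/d} ( M^d f(x) )^{1 − qκ/d}. -/

import Mathlib

/-!
Hedberg's argument. Write `A = ∫ |f|^q dH^d_∞` and `M = M^d f(x)`. Splitting the Choquet integral
of `|f|` over `B(x, r)` at the height `λ = (A / r^d)^{1/q}`, and bounding the level sets by the
content `r^d` of the ball below `λ` and by Chebyshev's `A t^{-q}` above it, gives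
`∫_{B(x,r)} |f| ≤ q/(q-1) r^{d(1-1/q)} A^{1/q}`. Hence the quantity in the supremum defining
`M^d_κ f(x)` is at most `q/(q-1) min(r^κ M, r^{κ-d/q} A^{1/q})`, and `min(u, v) ≤ u^θ v^{1-θ}`
with `θ = 1 - qκ/d` removes `r`. That the content of a ball is exactly `r^d` (for `d ≤ n`) comes
from comparing Lebesgue measures: a cover of `B(x, r)` by smaller balls has `∑ rᵢ^n ≥ r^n`,
hence `∑ rᵢ^d ≥ r^d`.
-/

open Metric Set ENNReal

/-- The δ-dimensional Hausdorff content of a set `E ⊆ ℝⁿ`: the infimum of `∑ rᵢ^δ`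
over all countable covers of `E` by open balls `B(xᵢ, rᵢ)`. -/
noncomputable def hContent (n : ℕ) (δ : ℝ) (E : Set (EuclideanSpace ℝ (Fin n))) : ℝ≥0∞ :=
  ⨅ (c : ℕ → EuclideanSpace ℝ (Fin n)) (r : ℕ → NNReal)
    (_ : E ⊆ ⋃ i, Metric.ball (c i) (r i)), ∑' i, (r i : ℝ≥0∞) ^ δ

/-- The Choquet integral `∫_Ω f dH^δ_∞ = ∫_0^∞ H^δ_∞({x ∈ Ω : f x > t}) dt`. -/
noncomputable def choquet (n : ℕ) (δ : ℝ) (Ω : Set (EuclideanSpace ℝ (Fin n)))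
    (f : EuclideanSpace ℝ (Fin n) → ℝ≥0∞) : ℝ≥0∞ :=
  ∫⁻ t in Set.Ioi (0 : ℝ), hContent n δ {x | x ∈ Ω ∧ ENNReal.ofReal t < f x}

/-- The Hausdorff content centred fractional maximal function `M^δ_κ f`. -/
noncomputable def maxF (n : ℕ) (δ κ : ℝ) (f : EuclideanSpace ℝ (Fin n) → EReal)
    (x : EuclideanSpace ℝ (Fin n)) : ℝ≥0∞ :=
  ⨆ (r : ℝ) (_ : 0 < r),
    (ENNReal.ofReal (r ^ κ) / hContent n δ (Metric.ball x r)) *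
      choquet n δ (Metric.ball x r) (fun y => (f y).abs)

open MeasureTheory Module

namespace ENNReal

theorem rpow_le_rpow_of_nonpos {a b : ℝ≥0∞} (hab : a ≤ b) {z : ℝ} (hz : z ≤ 0) :
    b ^ z ≤ a ^ z := by
  rw [← neg_neg z, rpow_neg b, rpow_neg a]
  exact ENNReal.inv_le_inv.2 (rpow_le_rpow hab (by linarith))

theorem min_le_rpow_mul_rpow (u v : ℝ≥0∞) {θ : ℝ} (h0 : 0 ≤ θ) (h1 : θ ≤ 1) :
    min u v ≤ u ^ θ * v ^ (1 - θ) := by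
  have h1' : 0 ≤ 1 - θ := by linarith
  rcases le_total u v with huv | hvu
  · calc min u v = u ^ θ * u ^ (1 - θ) := by
          rw [min_eq_left huv, ← rpow_add_of_nonneg _ _ h0 h1', add_sub_cancel, rpow_one]
      _ ≤ u ^ θ * v ^ (1 - θ) := by gcongr
  · calc min u v = v ^ θ * v ^ (1 - θ) := by
          rw [min_eq_right hvu, ← rpow_add_of_nonneg _ _ h0 h1', add_sub_cancel, rpow_one]
      _ ≤ u ^ θ * v ^ (1 - θ) := by gcongr

theorem min_rpow_mul_rpow_sub_mul_le {R : ℝ≥0∞} (hR0 : R ≠ 0) (hRt : R ≠ ⊤) (a b : ℝ≥0∞)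
    {κ s : ℝ} (hκ : 0 ≤ κ) (hκs : κ ≤ s) :
    min (R ^ κ * a) (R ^ (κ - s) * b) ≤ a ^ (1 - κ / s) * b ^ (κ / s) := by
  have hθ0 : 0 ≤ κ / s := div_nonneg hκ (hκ.trans hκs)
  have hθ1 : κ / s ≤ 1 := div_le_one_of_le₀ hκs (hκ.trans hκs)
  have hexp : κ * (1 - κ / s) + (κ - s) * (κ / s) = 0 := by
    rcases (hκ.trans hκs).eq_or_lt with hs | hs
    · obtain rfl : κ = 0 := le_antisymm (hs ▸ hκs) hκ
      simp
    · field_simp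
      ring
  calc min (R ^ κ * a) (R ^ (κ - s) * b)
      ≤ (R ^ κ * a) ^ (1 - κ / s) * (R ^ (κ - s) * b) ^ (1 - (1 - κ / s)) :=
        min_le_rpow_mul_rpow _ _ (by linarith) (by linarith)
    _ = R ^ (κ * (1 - κ / s) + (κ - s) * (κ / s)) * (a ^ (1 - κ / s) * b ^ (κ / s)) := by
        rw [_root_.sub_sub_cancel, mul_rpow_of_nonneg _ _ (by linarith), mul_rpow_of_nonneg _ _ hθ0,
          ← rpow_mul, ← rpow_mul, rpow_add _ _ hR0 hRt]
        ring
    _ = a ^ (1 - κ / s) * b ^ (κ / s) := by rw [hexp, rpow_zero, one_mul]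

theorem rpow_le_tsum_rpow_of_rpow_le_tsum_rpow {ι : Type*} {r : ℝ≥0∞} (hr : r ≠ ⊤)
    {ρ : ι → ℝ≥0∞} {d e : ℝ} (hd : 0 < d) (hde : d ≤ e) (h : r ^ e ≤ ∑' i, ρ i ^ e) :
    r ^ d ≤ ∑' i, ρ i ^ d := by
  by_cases hbig : ∃ i, r ≤ ρ i
  · obtain ⟨i, hi⟩ := hbig
    exact (rpow_le_rpow hi hd.le).trans (ENNReal.le_tsum i)
  push Not at hbig
  rcases eq_or_ne r 0 with rfl | hr0
  · simp [zero_rpow_of_pos hd]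
  have he : 0 < e := hd.trans_le hde
  have hterm : ∀ i, r ^ (d - e) * ρ i ^ e ≤ ρ i ^ d := fun i => by
    rcases eq_or_ne (ρ i) 0 with hρ | hρ
    · simp [hρ, zero_rpow_of_pos he]
    · calc r ^ (d - e) * ρ i ^ e ≤ ρ i ^ (d - e) * ρ i ^ e :=
            mul_le_mul_left (rpow_le_rpow_of_nonpos (hbig i).le (by linarith)) _
        _ = ρ i ^ d := by
            rw [← rpow_add _ _ hρ ((hbig i).trans_le le_top).ne, sub_add_cancel]
  calc r ^ d = r ^ (d - e) * r ^ e := by rw [← rpow_add _ _ hr0 hr, sub_add_cancel]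
    _ ≤ r ^ (d - e) * ∑' i, ρ i ^ e := by gcongr
    _ = ∑' i, r ^ (d - e) * ρ i ^ e := ENNReal.tsum_mul_left.symm
    _ ≤ ∑' i, ρ i ^ d := ENNReal.tsum_le_tsum hterm

end ENNReal

theorem ofReal_pow_finrank_le_tsum_of_ball_subset_iUnion {E ι : Type*} [NormedAddCommGroup E]
    [NormedSpace ℝ E] [FiniteDimensional ℝ E] [Nontrivial E] [Countable ι] {x : E} {r : ℝ}
    (hr : 0 < r) {c : ι → E} {ρ : ι → NNReal} (h : ball x r ⊆ ⋃ i, ball (c i) (ρ i)) :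
    ENNReal.ofReal r ^ finrank ℝ E ≤ ∑' i, (ρ i : ℝ≥0∞) ^ finrank ℝ E := by
  let : MeasurableSpace E := borel E
  have : BorelSpace E := ⟨rfl⟩
  set μ : Measure E := Measure.addHaar
  have hball : ∀ (y : E) {s : ℝ}, 0 ≤ s →
      μ (ball y s) = ENNReal.ofReal s ^ finrank ℝ E * μ (ball 0 1) := fun y s hs => by
    rw [Measure.addHaar_ball μ y hs, ofReal_pow hs]
  have hcover := (measure_mono (μ := μ) h).trans (measure_iUnion_le _)
  simp only [hball _ hr.le, hball _ NNReal.zero_le_coe, ofReal_coe_nnreal,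
    ENNReal.tsum_mul_right] at hcover
  exact (ENNReal.mul_le_mul_iff_left (measure_ball_pos μ 0 one_pos).ne'
    measure_ball_lt_top.ne).1 hcover

theorem hContent_mono {n : ℕ} {δ : ℝ} {E F : Set (EuclideanSpace ℝ (Fin n))} (h : E ⊆ F) :
    hContent n δ E ≤ hContent n δ F :=
  le_iInf fun c => le_iInf₂ fun ρ hF => iInf_le_of_le c (iInf₂_le ρ (h.trans hF))

theorem hContent_ball_le {n : ℕ} {d : ℝ} (hd : 0 < d) (x : EuclideanSpace ℝ (Fin n)) (r : ℝ) :
    hContent n d (ball x r) ≤ ENNReal.ofReal r ^ d := by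
  have hcov : ball x r ⊆ ⋃ i : ℕ, ball x (((Pi.single 0 r.toNNReal : ℕ → NNReal) i : ℝ)) :=
    fun y hy => mem_iUnion.2 ⟨0, by simpa using lt_max_of_lt_left (mem_ball.1 hy)⟩
  refine (iInf_le_of_le (fun _ => x) (iInf₂_le (Pi.single 0 r.toNNReal) hcov)).trans (le_of_eq ?_)
  rw [tsum_eq_single 0 fun i hi => by simp [hi, zero_rpow_of_pos hd]]
  simp [ENNReal.ofReal]

theorem ofReal_rpow_le_hContent_ball {n : ℕ} {d : ℝ} (hd : 0 < d) (hdn : d ≤ n)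
    (x : EuclideanSpace ℝ (Fin n)) {r : ℝ} (hr : 0 < r) :
    ENNReal.ofReal r ^ d ≤ hContent n d (ball x r) := by
  have : NeZero n := ⟨by rintro rfl; simp at hdn; linarith⟩
  refine le_iInf fun c => le_iInf₂ fun ρ hcov => ?_
  have hvol := ofReal_pow_finrank_le_tsum_of_ball_subset_iUnion hr hcov
  rw [finrank_euclideanSpace_fin] at hvol
  refine rpow_le_tsum_rpow_of_rpow_le_tsum_rpow ofReal_ne_top hd hdn ?_
  simpa only [rpow_natCast] using hvol

theorem hContent_ball {n : ℕ} {d : ℝ} (hd : 0 < d) (hdn : d ≤ n)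
    (x : EuclideanSpace ℝ (Fin n)) {r : ℝ} (hr : 0 < r) :
    hContent n d (ball x r) = ENNReal.ofReal r ^ d :=
  (hContent_ball_le hd x r).antisymm (ofReal_rpow_le_hContent_ball hd hdn x hr)

theorem setLIntegral_Ioi_div_ofReal_rpow {q : ℝ} (hq : 1 < q) {lam : ℝ} (hlam : 0 < lam)
    (A : ℝ≥0∞) :
    ∫⁻ t in Ioi lam, A / ENNReal.ofReal (t ^ q) = A * ENNReal.ofReal (lam ^ (1 - q) / (q - 1)) := by
  have hinv : ∀ t ∈ Ioi lam, A / ENNReal.ofReal (t ^ q) = A * ENNReal.ofReal (t ^ (-q)) :=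
    fun t ht => by
      have ht0 : 0 < t := hlam.trans ht
      rw [div_eq_mul_inv, ← ofReal_inv_of_pos (Real.rpow_pos_of_pos ht0 q), Real.rpow_neg ht0.le]
  rw [setLIntegral_congr_fun measurableSet_Ioi hinv, lintegral_const_mul A (by fun_prop),
    ← ofReal_integral_eq_lintegral_ofReal (integrableOn_Ioi_rpow_of_lt (by linarith) hlam)
      (ae_restrict_of_forall_mem measurableSet_Ioi fun t ht =>
        Real.rpow_nonneg (hlam.trans ht).le _),
    integral_Ioi_rpow_of_lt (by linarith) hlam]
  congr 2
  rw [neg_add_eq_sub, ← neg_sub q 1, div_neg, neg_div, neg_neg]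

theorem lintegral_min_div_rpow_le_of_pos (C A : ℝ≥0∞) {q : ℝ} (hq : 1 < q) {lam : ℝ}
    (hlam : 0 < lam) :
    ∫⁻ t in Ioi (0 : ℝ), min C (A / ENNReal.ofReal (t ^ q)) ≤
      C * ENNReal.ofReal lam + A * ENNReal.ofReal (lam ^ (1 - q) / (q - 1)) :=
  calc ∫⁻ t in Ioi (0 : ℝ), min C (A / ENNReal.ofReal (t ^ q))
      ≤ (∫⁻ t in Ioc 0 lam, min C (A / ENNReal.ofReal (t ^ q))) +
          ∫⁻ t in Ioi lam, min C (A / ENNReal.ofReal (t ^ q)) := by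
        rw [← Ioc_union_Ioi_eq_Ioi hlam.le]
        exact lintegral_union_le _ _ _
    _ ≤ (∫⁻ _ in Ioc 0 lam, C) + ∫⁻ t in Ioi lam, A / ENNReal.ofReal (t ^ q) :=
        add_le_add (lintegral_mono fun _ => min_le_left _ _)
          (lintegral_mono fun _ => min_le_right _ _)
    _ = C * ENNReal.ofReal lam + A * ENNReal.ofReal (lam ^ (1 - q) / (q - 1)) := by
        rw [setLIntegral_const, Real.volume_Ioc, sub_zero,
          setLIntegral_Ioi_div_ofReal_rpow hq hlam]

theorem Real.mul_rpow_inv_add_mul_rpow_div_eq {a c q : ℝ} (ha : 0 < a) (hc : 0 < c)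
    (hq : 1 < q) :
    c * (a / c) ^ q⁻¹ + a * (((a / c) ^ q⁻¹) ^ (1 - q) / (q - 1)) =
      q / (q - 1) * c ^ (1 - 1 / q) * a ^ (1 / q) := by
  have hq1 : q - 1 ≠ 0 := (sub_pos.2 hq).ne'
  set lam := (a / c) ^ q⁻¹ with hlam_def
  have hlam : 0 < lam := Real.rpow_pos_of_pos (div_pos ha hc) _
  have hclam : c * lam = c ^ (1 - 1 / q) * a ^ (1 / q) := by
    rw [hlam_def, Real.div_rpow ha.le hc.le, Real.rpow_sub hc, Real.rpow_one, one_div]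
    field_simp
  have halam : a * lam ^ (1 - q) = c * lam := by
    rw [Real.rpow_sub hlam, Real.rpow_one,
      Real.rpow_inv_rpow (div_pos ha hc).le (by linarith : q ≠ 0)]
    field_simp
  rw [mul_div_assoc', halam, mul_assoc, ← hclam]
  field_simp
  ring

theorem lintegral_min_div_rpow_le (C A : ℝ≥0∞) {q : ℝ} (hq : 1 < q) :
    ∫⁻ t in Ioi (0 : ℝ), min C (A / ENNReal.ofReal (t ^ q)) ≤
      ENNReal.ofReal (q / (q - 1)) * C ^ (1 - 1 / q) * A ^ (1 / q) := by
  have hq0 : 0 < q := by linarith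
  rcases eq_or_ne C 0 with rfl | hC0
  · simp
  rcases eq_or_ne A 0 with rfl | hA0
  · simp
  by_cases hinf : C = ⊤ ∨ A = ⊤
  · have hexp : 0 < 1 - 1 / q := by rw [sub_pos, div_lt_one hq0]; exact hq
    have hc : ENNReal.ofReal (q / (q - 1)) ≠ 0 := by
      simpa using div_pos hq0 (sub_pos.2 hq)
    have hCq : C ^ (1 - 1 / q) ≠ 0 := by
      rw [Ne, rpow_eq_zero_iff]
      rintro (⟨h, -⟩ | ⟨-, h⟩)
      exacts [hC0 h, lt_asymm hexp h]
    have hAq : A ^ (1 / q) ≠ 0 := by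
      rw [Ne, rpow_eq_zero_iff]
      rintro (⟨h, -⟩ | ⟨-, h⟩)
      exacts [hA0 h, lt_asymm (one_div_pos.2 hq0) h]
    suffices h : ENNReal.ofReal (q / (q - 1)) * C ^ (1 - 1 / q) * A ^ (1 / q) = ⊤ from
      h ▸ le_top
    rcases hinf with rfl | rfl
    · rw [top_rpow_of_pos hexp, mul_top hc, top_mul hAq]
    · rw [top_rpow_of_pos (one_div_pos.2 hq0), mul_top (mul_ne_zero hc hCq)]
  push Not at hinf
  obtain ⟨c, hc, hcC⟩ : ∃ c, 0 < c ∧ ENNReal.ofReal c = C :=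
    ⟨C.toReal, toReal_pos hC0 hinf.1, ofReal_toReal hinf.1⟩
  obtain ⟨a, ha, haA⟩ : ∃ a, 0 < a ∧ ENNReal.ofReal a = A :=
    ⟨A.toReal, toReal_pos hA0 hinf.2, ofReal_toReal hinf.2⟩
  -- the height at which the two bounds `C` and `A t^{-q}` on the level sets cross
  have hlam : 0 < (a / c) ^ q⁻¹ := Real.rpow_pos_of_pos (div_pos ha hc) _
  refine (lintegral_min_div_rpow_le_of_pos C A hq hlam).trans (le_of_eq ?_)
  rw [← hcC, ← haA, ofReal_rpow_of_pos hc, ofReal_rpow_of_pos ha, ← ofReal_mul hc.le,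
    ← ofReal_mul ha.le, ← ofReal_add (by positivity) (by positivity),
    ← ofReal_mul (by positivity), ← ofReal_mul (by positivity),
    Real.mul_rpow_inv_add_mul_rpow_div_eq ha hc hq]

theorem ofReal_rpow_mul_hContent_le_choquet {n : ℕ} {δ q : ℝ} (hq : 0 < q)
    (g : EuclideanSpace ℝ (Fin n) → ℝ≥0∞) {t : ℝ} (ht : 0 < t) :
    ENNReal.ofReal (t ^ q) * hContent n δ {y | ENNReal.ofReal t < g y} ≤
      choquet n δ univ (fun y => g y ^ q) := by
  have hsub : ∀ s ∈ Ioc 0 (t ^ q), hContent n δ {y | ENNReal.ofReal t < g y} ≤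
      hContent n δ {y | y ∈ univ ∧ ENNReal.ofReal s < g y ^ q} := fun s hs =>
    hContent_mono fun y hy => ⟨mem_univ y, calc
      ENNReal.ofReal s ≤ ENNReal.ofReal (t ^ q) := ofReal_le_ofReal hs.2
      _ = ENNReal.ofReal t ^ q := (ofReal_rpow_of_pos ht).symm
      _ < g y ^ q := rpow_lt_rpow hy hq⟩
  calc ENNReal.ofReal (t ^ q) * hContent n δ {y | ENNReal.ofReal t < g y}
      = ∫⁻ _ in Ioc 0 (t ^ q), hContent n δ {y | ENNReal.ofReal t < g y} := by
        rw [setLIntegral_const, Real.volume_Ioc, sub_zero, mul_comm]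
    _ ≤ ∫⁻ s in Ioc 0 (t ^ q), hContent n δ {y | y ∈ univ ∧ ENNReal.ofReal s < g y ^ q} :=
        setLIntegral_mono' measurableSet_Ioc hsub
    _ ≤ choquet n δ univ (fun y => g y ^ q) := lintegral_mono_set Ioc_subset_Ioi_self

theorem choquet_le_hContent_rpow_mul_choquet_rpow {n : ℕ} {δ q : ℝ} (hq : 1 < q)
    (Ω : Set (EuclideanSpace ℝ (Fin n))) (g : EuclideanSpace ℝ (Fin n) → ℝ≥0∞) :
    choquet n δ Ω g ≤ ENNReal.ofReal (q / (q - 1)) * hContent n δ Ω ^ (1 - 1 / q) *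
      choquet n δ univ (fun y => g y ^ q) ^ (1 / q) := by
  refine le_trans (setLIntegral_mono' measurableSet_Ioi fun t (ht : 0 < t) => ?_)
    (lintegral_min_div_rpow_le _ _ hq)
  have htq : ENNReal.ofReal (t ^ q) ≠ 0 := by simpa using Real.rpow_pos_of_pos ht q
  refine le_min (hContent_mono fun y hy => hy.1) ?_
  rw [ENNReal.le_div_iff_mul_le (Or.inl htq) (Or.inl ofReal_ne_top), mul_comm]
  exact (mul_le_mul_right (hContent_mono fun y hy => hy.2) _).trans
    (ofReal_rpow_mul_hContent_le_choquet (by linarith) g ht)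

theorem ofReal_rpow_div_hContent_mul_choquet_le_mul_maxF_zero {n : ℕ} {δ κ : ℝ}
    (f : EuclideanSpace ℝ (Fin n) → EReal) (x : EuclideanSpace ℝ (Fin n)) {r : ℝ} (hr : 0 < r) :
    ENNReal.ofReal (r ^ κ) / hContent n δ (ball x r) * choquet n δ (ball x r) (fun y => (f y).abs)
      ≤ ENNReal.ofReal r ^ κ * maxF n δ 0 f x := by
  have hM := le_iSup₂ (f := fun (r : ℝ) (_ : 0 < r) => ENNReal.ofReal (r ^ (0 : ℝ)) /
    hContent n δ (ball x r) * choquet n δ (ball x r) (fun y => (f y).abs)) r hr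
  rw [Real.rpow_zero, ofReal_one, one_div] at hM
  rw [div_eq_mul_inv, mul_assoc, ofReal_rpow_of_pos hr]
  exact mul_le_mul_right hM _

theorem ofReal_rpow_div_hContent_mul_choquet_le {n : ℕ} {d κ q : ℝ} (hd : 0 < d) (hdn : d ≤ n)
    (hq : 1 < q) (g : EuclideanSpace ℝ (Fin n) → ℝ≥0∞) (x : EuclideanSpace ℝ (Fin n)) {r : ℝ}
    (hr : 0 < r) :
    ENNReal.ofReal (r ^ κ) / hContent n d (ball x r) * choquet n d (ball x r) g ≤
      ENNReal.ofReal (q / (q - 1)) *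
        (ENNReal.ofReal r ^ (κ - d / q) * choquet n d univ (fun y => g y ^ q) ^ (1 / q)) := by
  set R := ENNReal.ofReal r
  have hR0 : R ≠ 0 := (ofReal_pos.2 hr).ne'
  have hRt : R ≠ ⊤ := ofReal_ne_top
  have hchoquet := choquet_le_hContent_rpow_mul_choquet_rpow (δ := d) hq (ball x r) g
  rw [hContent_ball hd hdn x hr] at hchoquet ⊢
  rw [← ofReal_rpow_of_pos hr]
  calc _ ≤ R ^ κ / R ^ d * (ENNReal.ofReal (q / (q - 1)) * (R ^ d) ^ (1 - 1 / q) *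
        choquet n d univ (fun y => g y ^ q) ^ (1 / q)) := by gcongr
    _ = _ := by
        rw [← rpow_sub _ _ hR0 hRt, ← rpow_mul, mul_comm (ENNReal.ofReal _),
          mul_assoc _ (ENNReal.ofReal _), ← mul_assoc, ← rpow_add _ _ hR0 hRt]
        ring_nf

theorem maxF_fractional_pointwise_general (n : ℕ) (d κ q : ℝ) (hd0 : 0 < d)
    (hdn : d ≤ n) (hκ0 : 0 < κ) (hq1 : 1 < q) (hq : q < d / κ) :
    ∃ c : ℝ≥0∞, c ≠ ∞ ∧ ∀ (f : EuclideanSpace ℝ (Fin n) → EReal)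
      (x : EuclideanSpace ℝ (Fin n)),
      maxF n d κ f x ≤
        c * (choquet n d Set.univ (fun y => (f y).abs ^ q)) ^ (κ / d) *
          (maxF n d 0 f x) ^ (1 - q * κ / d) := by
  set c := ENNReal.ofReal (q / (q - 1))
  have hc : 1 ≤ c := by
    rw [← ofReal_one]
    exact ofReal_le_ofReal ((one_le_div (sub_pos.2 hq1)).2 (by linarith))
  have hκs : κ ≤ d / q := by
    rw [le_div_iff₀ (by linarith), mul_comm]
    exact ((lt_div_iff₀ hκ0).1 hq).le
  refine ⟨c, ofReal_ne_top, fun f x => iSup₂_le fun r hr => ?_⟩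
  set A := choquet n d univ (fun y => (f y).abs ^ q)
  set M := maxF n d 0 f x
  have hmax := ofReal_rpow_div_hContent_mul_choquet_le_mul_maxF_zero (δ := d) (κ := κ) f x hr
  have hholder := ofReal_rpow_div_hContent_mul_choquet_le (κ := κ) hd0 hdn hq1
    (fun y => (f y).abs) x hr
  calc _ ≤ c * min (ENNReal.ofReal r ^ κ * M) (ENNReal.ofReal r ^ (κ - d / q) * A ^ (1 / q)) := by
        rw [mul_min]
        exact le_min (hmax.trans (le_mul_of_one_le_left' hc)) hholder
    _ ≤ c * (M ^ (1 - κ / (d / q)) * (A ^ (1 / q)) ^ (κ / (d / q))) := by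
        gcongr
        exact min_rpow_mul_rpow_sub_mul_le (ofReal_pos.2 hr).ne' ofReal_ne_top _ _ hκ0.le hκs
    _ = c * A ^ (κ / d) * M ^ (1 - q * κ / d) := by
        have hq0 : q ≠ 0 := by linarith
        rw [← rpow_mul, show κ / (d / q) = q * κ / d by field_simp,
          show 1 / q * (q * κ / d) = κ / d by field_simp]
        ring

/-- Pointwise estimate of the fractional maximal function by the maximal function:
for `d ∈ (0, n]`, `κ ∈ (0, d)` and `1 < q < d/κ` there is a constant `c = c(d)` such that
`M^d_κ f(x) ≤ c (∫_{ℝⁿ} |f|^q dH^d_∞)^{κ/d} (M^d f(x))^{1 - qκ/d}` for any function `f`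
and every `x`. -/
theorem maxF_fractional_pointwise (n : ℕ) (hn : 1 ≤ n) (d κ q : ℝ) (hd0 : 0 < d)
    (hdn : d ≤ n) (hκ0 : 0 < κ) (hκd : κ < d) (hq1 : 1 < q) (hq : q < d / κ) :
    ∃ c : ℝ≥0∞, c ≠ ∞ ∧ ∀ (f : EuclideanSpace ℝ (Fin n) → EReal)
      (x : EuclideanSpace ℝ (Fin n)),
      maxF n d κ f x ≤
        c * (choquet n d Set.univ (fun y => (f y).abs ^ q)) ^ (κ / d) *
          (maxF n d 0 f x) ^ (1 - q * κ / d) :=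
  maxF_fractional_pointwise_general n d κ q hd0 hdn hκ0 hq1 hq
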